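/- arXiv:1710.07602 — 7 statements merged into one kernel-verified Lean document; each statement's English description precedes it below -/
import Mathlib

section
/- Consider the first-order implicit-explicit scheme for the linear advection model problem on L ≥ 1 cells with periodic boundary conditions: given w^n : Fin L → ℝ and Courant numbers σ_e ≥ 0 and σ_i ≥ 0, suppose w^{n+1} : Fin L → ℝ satisfies, for every j (indices cyclic mod L), w_j^{n+1} = w_j^n − σ_e (w_j^n − w_{j−1}^n) − σ_i (w_j^{n+1} − w_{j−1}^{n+1}). If the CFL condition σ_e ≤ 1 holds, then the scheme is total variation diminishing: TV(w^{n+1}) ≤ TV(w^n). -/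
/-!
The scheme is linear and commutes with cyclic shifts, so the increments `w (j + 1) - w j` of
two consecutive time levels again satisfy the scheme. Solving for the new value, a step reads
`(1 + σi) u j = (1 - σe) v j + σe v (j - 1) + σi u (j - 1)`, with nonnegative coefficients when
`σe ≤ 1`; taking absolute values and summing over the periodic grid gives the `ℓ¹` contraction
`∑ |u| ≤ ∑ |v|`. Applied to the increments, this is the TVD property.
-/

open Finset

variable {G : Type*} [AddCommGroup G]

def IsImexUpwindStep (σe σi : ℝ) (s : G) (v u : G → ℝ) : Prop :=
  ∀ j, u j = v j - σe * (v j - v (j - s)) - σi * (u j - u (j - s))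

namespace IsImexUpwindStep

variable {σe σi : ℝ} {s : G} {v u : G → ℝ}

theorem fwdDiff (h : IsImexUpwindStep σe σi s v u) :
    IsImexUpwindStep σe σi s (fwdDiff s v) (fwdDiff s u) := by
  intro j
  have hj := h j
  have hjs := h (j + s)
  simp only [add_sub_cancel_right] at hjs
  simp only [_root_.fwdDiff, sub_add_cancel]
  linarith

theorem one_add_mul_abs_le (hσe : 0 ≤ σe) (hσi : 0 ≤ σi) (hCFL : σe ≤ 1)
    (h : IsImexUpwindStep σe σi s v u) (j : G) :
    (1 + σi) * |u j| ≤ (1 - σe) * |v j| + σe * |v (j - s)| + σi * |u (j - s)| := by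
  have hsolved : (1 + σi) * u j = (1 - σe) * v j + σe * v (j - s) + σi * u (j - s) := by
    linarith [h j]
  calc (1 + σi) * |u j| = |(1 + σi) * u j| := by
        rw [abs_mul, abs_of_nonneg (by linarith : 0 ≤ 1 + σi)]
    _ ≤ |(1 - σe) * v j| + |σe * v (j - s)| + |σi * u (j - s)| := by
        rw [hsolved]
        exact (abs_add_le _ _).trans (add_le_add_left (abs_add_le _ _) _)
    _ = (1 - σe) * |v j| + σe * |v (j - s)| + σi * |u (j - s)| := by
        rw [abs_mul, abs_mul, abs_mul, abs_of_nonneg (sub_nonneg.2 hCFL), abs_of_nonneg hσe,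
          abs_of_nonneg hσi]

theorem sum_abs_le [Fintype G] (hσe : 0 ≤ σe) (hσi : 0 ≤ σi) (hCFL : σe ≤ 1)
    (h : IsImexUpwindStep σe σi s v u) : ∑ j, |u j| ≤ ∑ j, |v j| := by
  have shift (w : G → ℝ) : ∑ j, |w (j - s)| = ∑ j, |w j| :=
    Equiv.sum_comp (Equiv.subRight s) fun j => |w j|
  have hsum := sum_le_sum fun j (_ : j ∈ univ) => h.one_add_mul_abs_le hσe hσi hCFL j
  rw [← mul_sum, sum_add_distrib, sum_add_distrib, ← mul_sum, ← mul_sum, ← mul_sum,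
    shift v, shift u] at hsum
  linarith

end IsImexUpwindStep

/-- TVD property of the first-order implicit-explicit scheme for the linear
advection model problem with periodic boundary conditions, under the CFL
condition `σe ≤ 1`. -/
theorem first_order_scheme_TVD (L : ℕ) [NeZero L] (σe σi : ℝ)
    (hσe : 0 ≤ σe) (hσi : 0 ≤ σi) (hCFL : σe ≤ 1)
    (wn wn1 : Fin L → ℝ)
    (hscheme : ∀ j : Fin L,
      wn1 j = wn j - σe * (wn j - wn (j - 1)) - σi * (wn1 j - wn1 (j - 1))) :
    ∑ j : Fin L, |wn1 (j + 1) - wn1 j| ≤ ∑ j : Fin L, |wn (j + 1) - wn j| :=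
  (IsImexUpwindStep.fwdDiff (s := 1) hscheme).sum_abs_le hσe hσi hCFL
end

section
/- Consider the first-order implicit-explicit scheme for the linear advection model problem on L ≥ 1 cells with periodic boundary conditions: given w^n : Fin L → ℝ and Courant numbers σ_e ≥ 0 and σ_i ≥ 0, suppose w^{n+1} : Fin L → ℝ satisfies, for every j (indices cyclic mod L), w_j^{n+1} = w_j^n − σ_e (w_j^n − w_{j−1}^n) − σ_i (w_j^{n+1} − w_{j−1}^{n+1}). If the CFL condition σ_e ≤ 1 holds, then the scheme is L²-stable: Σ_j (w_j^{n+1})² ≤ Σ_j (w_j^n)². -/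
lemma sum_shift_aux {L : ℕ} [NeZero L] (g : Fin L → ℝ) :
    ∑ j : Fin L, g (j - 1) = ∑ j : Fin L, g j :=
  Fintype.sum_equiv (Equiv.subRight 1) _ _ (fun _ => rfl)

/-- L²-stability of the first-order implicit-explicit scheme for the linear
advection model problem with periodic boundary conditions, under the CFL
condition `σe ≤ 1`. -/
theorem first_order_scheme_L2_stable (L : ℕ) [NeZero L] (σe σi : ℝ)
    (hσe : 0 ≤ σe) (hσi : 0 ≤ σi) (hCFL : σe ≤ 1)
    (wn wn1 : Fin L → ℝ)
    (hscheme : ∀ j : Fin L,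
      wn1 j = wn j - σe * (wn j - wn (j - 1)) - σi * (wn1 j - wn1 (j - 1))) :
    ∑ j : Fin L, (wn1 j) ^ 2 ≤ ∑ j : Fin L, (wn j) ^ 2 := by
  set S1 := ∑ j : Fin L, (wn1 j) ^ 2 with hS1
  set S0 := ∑ j : Fin L, (wn j) ^ 2 with hS0
  have hkey : ∀ j : Fin L,
      wn1 j ^ 2 + σi * (wn1 j * (wn1 j - wn1 (j - 1)))
        = (1 - σe) * (wn1 j * wn j) + σe * (wn1 j * wn (j - 1)) := by
    intro j
    linear_combination (wn1 j) * (hscheme j)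
  have hsum : S1 + σi * ∑ j : Fin L, wn1 j * (wn1 j - wn1 (j - 1))
      = (1 - σe) * ∑ j : Fin L, wn1 j * wn j
        + σe * ∑ j : Fin L, wn1 j * wn (j - 1) := by
    rw [Finset.mul_sum, Finset.mul_sum, Finset.mul_sum, hS1,
      ← Finset.sum_add_distrib, ← Finset.sum_add_distrib]
    exact Finset.sum_congr rfl fun j _ => hkey j
  -- the dissipation term is nonnegative
  have hshift1 : ∑ j : Fin L, (wn1 (j - 1)) ^ 2 = S1 := sum_shift_aux (fun j => wn1 j ^ 2)
  have hshift0 : ∑ j : Fin L, (wn (j - 1)) ^ 2 = S0 := sum_shift_aux (fun j => wn j ^ 2)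
  have hD : 0 ≤ ∑ j : Fin L, wn1 j * (wn1 j - wn1 (j - 1)) := by
    have h1 : ∑ j : Fin L, wn1 j * wn1 (j - 1)
        ≤ (S1 + ∑ j : Fin L, (wn1 (j - 1)) ^ 2) / 2 := by
      rw [hS1, ← Finset.sum_add_distrib, Finset.sum_div]
      refine Finset.sum_le_sum fun j _ => ?_
      nlinarith [sq_nonneg (wn1 j - wn1 (j - 1))]
    have h2 : ∑ j : Fin L, wn1 j * (wn1 j - wn1 (j - 1))
        = S1 - ∑ j : Fin L, wn1 j * wn1 (j - 1) := by
      rw [hS1, ← Finset.sum_sub_distrib]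
      exact Finset.sum_congr rfl fun j _ => by ring
    rw [h2]
    linarith [hshift1, h1]
  have hA : ∑ j : Fin L, wn1 j * wn j ≤ (S1 + S0) / 2 := by
    rw [hS1, hS0, ← Finset.sum_add_distrib, Finset.sum_div]
    refine Finset.sum_le_sum fun j _ => ?_
    nlinarith [sq_nonneg (wn1 j - wn j)]
  have hB : ∑ j : Fin L, wn1 j * wn (j - 1) ≤ (S1 + S0) / 2 := by
    have : ∑ j : Fin L, wn1 j * wn (j - 1)
        ≤ (S1 + ∑ j : Fin L, (wn (j - 1)) ^ 2) / 2 := by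
      rw [hS1, ← Finset.sum_add_distrib, Finset.sum_div]
      refine Finset.sum_le_sum fun j _ => ?_
      nlinarith [sq_nonneg (wn1 j - wn (j - 1))]
    linarith [hshift0]
  nlinarith [mul_nonneg hσi hD, mul_le_mul_of_nonneg_left hA (by linarith : (0:ℝ) ≤ 1 - σe), mul_le_mul_of_nonneg_left hB hσe]
end

section
/- Asymptotic-preserving limit of the first-order scheme: fix L ≥ 1, σ_e ≥ 0 and w^n : Fin L → ℝ, and for each σ > 0 let v(σ) : Fin L → ℝ be the unique solution of the periodic implicit relation v(σ)_j + σ (v(σ)_j − v(σ)_{j−1}) = w_j^n − σ_e (w_j^n − w_{j−1}^n) for all j (indices cyclic mod L). Then, as σ → ∞, v(σ)_j converges for every j to the mean value (1/L) Σ_k w_k^n; i.e. in the vanishing-Mach-number limit the scheme projects onto the constant state equal to the average of w^n. -/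
/-!
The implicit relation `v_j + σ (v_j - v_{j-1}) = b_j` obeys a discrete maximum principle,
`‖v‖∞ ≤ ‖b‖∞`, uniformly in `σ ≥ 0`. Hence every jump `v_j - v_{j-1} = (b_j - v_j) / σ` is
`O(1/σ)`, and so is the oscillation of `v` around the cycle. On the other hand the periodic
difference sums to zero, so `∑ v = ∑ b = ∑ wⁿ` for every `σ`: the mean is conserved, and a
function whose oscillation tends to zero converges to its mean.
-/

open Filter Topology

section ImplicitUpwind

variable {ι : Type*} [Fintype ι]

theorem norm_le_of_implicit_upwind (p : ι → ι) {σ : ℝ} (hσ : 0 ≤ σ) {v b : ι → ℝ}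
    (h : ∀ j, v j + σ * (v j - v (p j)) = b j) : ‖v‖ ≤ ‖b‖ := by
  have hσ1 : 0 < 1 + σ := by linarith
  suffices ‖v‖ * (1 + σ) ≤ ‖b‖ + σ * ‖v‖ by nlinarith
  rw [← le_div_iff₀ hσ1, pi_norm_le_iff_of_nonneg (by positivity)]
  intro j
  rw [le_div_iff₀ hσ1, Real.norm_eq_abs]
  calc |v j| * (1 + σ) = |b j + σ * v (p j)| := by
        rw [← abs_of_pos hσ1, ← abs_mul, ← h j]; ring_nf
    _ ≤ |b j| + σ * |v (p j)| := by
        grw [abs_add_le, abs_mul, abs_of_nonneg hσ]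
    _ ≤ ‖b‖ + σ * ‖v‖ := by
        grw [← Real.norm_eq_abs, norm_le_pi_norm b j, ← Real.norm_eq_abs, norm_le_pi_norm v]

theorem abs_sub_comp_le_of_implicit_upwind (p : ι → ι) {σ : ℝ} (hσ : 0 < σ) {v b : ι → ℝ}
    (h : ∀ j, v j + σ * (v j - v (p j)) = b j) (j : ι) :
    |v j - v (p j)| ≤ 2 * ‖b‖ / σ := by
  have hv := norm_le_of_implicit_upwind p hσ.le h
  rw [le_div_iff₀ hσ, ← abs_of_pos hσ, ← abs_mul, mul_comm,
    show σ * (v j - v (p j)) = b j - v j by linarith [h j]]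
  calc |b j - v j| ≤ ‖b j‖ + ‖v j‖ := abs_sub _ _
    _ ≤ ‖b‖ + ‖v‖ := add_le_add (norm_le_pi_norm b j) (norm_le_pi_norm v j)
    _ ≤ 2 * ‖b‖ := by linarith

theorem sum_sub_comp_perm (e : Equiv.Perm ι) (f : ι → ℝ) : ∑ i, (f i - f (e i)) = 0 := by
  rw [Finset.sum_sub_distrib, Equiv.sum_comp e, sub_self]

theorem sum_eq_of_implicit_upwind (e : Equiv.Perm ι) {σ : ℝ} {v b : ι → ℝ}
    (h : ∀ j, v j + σ * (v j - v (e j)) = b j) : ∑ j, v j = ∑ j, b j := by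
  simp only [← h, Finset.sum_add_distrib, ← Finset.mul_sum, sum_sub_comp_perm, mul_zero, add_zero]

theorem abs_sub_mean_le [Nonempty ι] {u : ι → ℝ} {C : ℝ} {j : ι} (h : ∀ k, |u j - u k| ≤ C) :
    |u j - (∑ k, u k) / Fintype.card ι| ≤ C := by
  have hcard : (0 : ℝ) < Fintype.card ι := by exact_mod_cast Fintype.card_pos
  have hmean : u j - (∑ k, u k) / Fintype.card ι = (∑ k, (u j - u k)) / Fintype.card ι := by
    rw [Finset.sum_sub_distrib, Finset.sum_const, Finset.card_univ, nsmul_eq_mul]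
    field_simp
  rw [hmean, abs_div, abs_of_pos hcard, div_le_iff₀ hcard]
  calc |∑ k, (u j - u k)| ≤ ∑ k, |u j - u k| := Finset.abs_sum_le_sum_abs _ _
    _ ≤ ∑ _k : ι, C := Finset.sum_le_sum fun k _ => h k
    _ = C * Fintype.card ι := by simp [mul_comm]

end ImplicitUpwind

open Fin.NatCast in
theorem abs_sub_le_of_abs_sub_pred_le {L : ℕ} [NeZero L] {u : Fin L → ℝ} {δ : ℝ}
    (h : ∀ j, |u j - u (j - 1)| ≤ δ) (j k : Fin L) : |u j - u k| ≤ L * δ := by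
  have hδ : 0 ≤ δ := (abs_nonneg _).trans (h 0)
  have hstep : ∀ n : ℕ, |u j - u (j - n)| ≤ n * δ := by
    intro n
    induction n with
    | zero => simp
    | succ n ih =>
      calc |u j - u (j - ↑(n + 1))|
          ≤ |u j - u (j - n)| + |u (j - n) - u (j - n - 1)| := by
            push_cast; rw [← sub_sub]; exact abs_sub_le _ _ _
        _ ≤ (n + 1 : ℕ) * δ := by push_cast; linarith [h (j - n)]
  calc |u j - u k| = |u j - u (j - ((j - k : Fin L).val : Fin L))| := by
        rw [Fin.cast_val_eq_self, sub_sub_cancel]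
    _ ≤ (j - k : Fin L).val * δ := hstep _
    _ ≤ L * δ := by gcongr; exact_mod_cast (j - k).isLt.le

theorem first_order_scheme_AP_limit_general (L : ℕ) [NeZero L] (σe : ℝ)
    (wn : Fin L → ℝ) (v : ℝ → Fin L → ℝ)
    (hv : ∀ σ : ℝ, 0 < σ → ∀ j : Fin L,
      v σ j + σ * (v σ j - v σ (j - 1)) = wn j - σe * (wn j - wn (j - 1))) :
    ∀ j : Fin L,
      Tendsto (fun σ : ℝ => v σ j) atTop (𝓝 ((∑ k : Fin L, wn k) / L)) := by
  intro j
  set b : Fin L → ℝ := fun i => wn i - σe * (wn i - wn (i - 1))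
  have hb : ∑ i, b i = ∑ i, wn i := by
    have hshift : ∑ i, (wn i - wn (i - 1)) = 0 := sum_sub_comp_perm (Equiv.subRight 1) wn
    rw [Finset.sum_sub_distrib, ← Finset.mul_sum, hshift, mul_zero, sub_zero]
  have hbound : ∀ σ : ℝ, 0 < σ → |v σ j - (∑ k, wn k) / L| ≤ L * (2 * ‖b‖ / σ) := by
    intro σ hσ
    have hσv : ∀ i, v σ i + σ * (v σ i - v σ (Equiv.subRight 1 i)) = b i := hv σ hσ
    have := abs_sub_mean_le fun k => abs_sub_le_of_abs_sub_pred_le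
      (abs_sub_comp_le_of_implicit_upwind _ hσ hσv) j k
    rwa [sum_eq_of_implicit_upwind _ hσv, hb, Fintype.card_fin] at this
  have hrate : Tendsto (fun σ : ℝ => L * (2 * ‖b‖ / σ)) atTop (𝓝 0) := by
    simpa using (tendsto_const_nhds.div_atTop tendsto_id).const_mul (L : ℝ)
  rw [tendsto_iff_norm_sub_tendsto_zero]
  exact squeeze_zero' (.of_forall fun _ => norm_nonneg _)
    ((eventually_gt_atTop 0).mono hbound) hrate

/-- Asymptotic-preserving limit of the first-order scheme: as the implicit
Courant number `σ` tends to `+∞`, the solution of the periodic implicit relation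
tends, in every cell, to the mean value of `wn`. -/
theorem first_order_scheme_AP_limit (L : ℕ) [NeZero L] (σe : ℝ) (hσe : 0 ≤ σe)
    (wn : Fin L → ℝ) (v : ℝ → Fin L → ℝ)
    (hv : ∀ σ : ℝ, 0 < σ → ∀ j : Fin L,
      v σ j + σ * (v σ j - v σ (j - 1)) = wn j - σe * (wn j - wn (j - 1))) :
    ∀ j : Fin L,
      Tendsto (fun σ : ℝ => v σ j) atTop (𝓝 ((∑ k : Fin L, wn k) / L)) :=
  first_order_scheme_AP_limit_general L σe wn v hv
end

section
/- Amplification factor bound for the first stage of the ARS(2,2,2) scheme: let β = 1 − √2/2, let σ_e ≥ 0 with β σ_e ≤ 1, let σ_i ≥ 0, and let c, s ∈ ℝ with c² + s² = 1. Setting z = (1 − c) + i s ∈ ℂ and f = (1 − β σ_e z)/(1 + β σ_i z), one has |1 − β σ_e z|² = 1 − 2 β σ_e (1 − c)(1 − β σ_e) and |f| ≤ 1. -/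
/-! The Fourier symbol `z = (1 - c) + i s` of the upwind difference lies on the circle `|z - 1| = 1`,
i.e. `|z|² = 2 Re z`, and `Re z ≥ 0`. On that circle `|1 - a z|² = 1 - 2a(1 - a) Re z` for real `a`,
which is at most `1` once `0 ≤ a ≤ 1`; the implicit denominator satisfies `|1 + b z| ≥ Re (1 + b z) ≥ 1`
for `b ≥ 0`. -/

open Complex

namespace Complex

lemma normSq_one_sub_ofReal_mul_of_normSq_eq {z : ℂ} (hz : normSq z = 2 * z.re) (a : ℝ) :
    normSq (1 - a * z) = 1 - 2 * a * (1 - a) * z.re := by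
  have expand : normSq (1 - a * z) = 1 - 2 * a * z.re + a ^ 2 * normSq z := by
    simp only [normSq_apply, sub_re, sub_im, mul_re, mul_im, ofReal_re, ofReal_im, one_re, one_im]
    ring
  rw [expand, hz]
  ring

lemma norm_one_sub_ofReal_mul_le_one {z : ℂ} (hz : normSq z = 2 * z.re) (hre : 0 ≤ z.re)
    {a : ℝ} (ha₀ : 0 ≤ a) (ha₁ : a ≤ 1) : ‖1 - a * z‖ ≤ 1 := by
  rw [← sq_le_one_iff₀ (norm_nonneg _), Complex.sq_norm, normSq_one_sub_ofReal_mul_of_normSq_eq hz]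
  have : 0 ≤ a * (1 - a) * z.re := mul_nonneg (mul_nonneg ha₀ (by linarith)) hre
  linarith

lemma one_le_norm_one_add_ofReal_mul {z : ℂ} (hre : 0 ≤ z.re) {b : ℝ} (hb : 0 ≤ b) :
    1 ≤ ‖1 + b * z‖ :=
  calc 1 ≤ 1 + b * z.re := le_add_of_nonneg_right (mul_nonneg hb hre)
    _ = (1 + b * z).re := by simp
    _ ≤ ‖1 + b * z‖ := re_le_norm _

lemma normSq_one_sub_add_mul_I {c s : ℝ} (hcs : c ^ 2 + s ^ 2 = 1) :
    normSq (1 - c + s * I) = 2 * (1 - c + s * I).re := by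
  simp only [normSq_apply, add_re, add_im, sub_re, sub_im, mul_re, mul_im, ofReal_re, ofReal_im,
    one_re, one_im, I_re, I_im]
  linear_combination hcs

lemma re_one_sub_add_mul_I (c s : ℝ) : (1 - c + s * I).re = 1 - c := by simp

lemma re_one_sub_add_mul_I_nonneg {c s : ℝ} (hcs : c ^ 2 + s ^ 2 = 1) :
    0 ≤ (1 - c + s * I).re := by
  rw [re_one_sub_add_mul_I]
  nlinarith [sq_nonneg s]

end Complex

lemma one_sub_sqrt_two_div_two_nonneg : 0 ≤ 1 - √2 / 2 := by
  have : √2 ≤ 2 := Real.sqrt_le_left zero_le_two |>.mpr (by norm_num)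
  linarith

/-- Amplification factor bound for the first stage of the ARS(2,2,2) scheme:
with `z = (1 - c) + i s` on a Fourier mode, the modulus of the numerator
satisfies the given identity and the stage amplification factor has modulus
at most one. -/
theorem ARS222_first_stage_amplification (β σe σi c s : ℝ)
    (hβ : β = 1 - Real.sqrt 2 / 2)
    (hσe : 0 ≤ σe) (hCFL : β * σe ≤ 1) (hσi : 0 ≤ σi)
    (hcs : c ^ 2 + s ^ 2 = 1) :
    ‖(1 - (β : ℂ) * (σe : ℂ) * ((1 - (c : ℂ)) + (s : ℂ) * Complex.I))‖ ^ 2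
      = 1 - 2 * β * σe * (1 - c) * (1 - β * σe) ∧
    ‖((1 - (β : ℂ) * (σe : ℂ) * ((1 - (c : ℂ)) + (s : ℂ) * Complex.I))
      / (1 + (β : ℂ) * (σi : ℂ) * ((1 - (c : ℂ)) + (s : ℂ) * Complex.I)))‖ ≤ 1 := by
  set z : ℂ := 1 - c + s * I
  have hz : normSq z = 2 * z.re := normSq_one_sub_add_mul_I hcs
  have hre : 0 ≤ z.re := re_one_sub_add_mul_I_nonneg hcs
  have hβ₀ : 0 ≤ β := hβ ▸ one_sub_sqrt_two_div_two_nonneg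
  simp only [← ofReal_mul]
  refine ⟨?_, ?_⟩
  · rw [Complex.sq_norm, normSq_one_sub_ofReal_mul_of_normSq_eq hz, re_one_sub_add_mul_I]
    ring
  · have hden := one_le_norm_one_add_ofReal_mul hre (mul_nonneg hβ₀ hσi)
    rw [norm_div, div_le_one (zero_lt_one.trans_le hden)]
    exact (norm_one_sub_ofReal_mul_le_one hz hre (mul_nonneg hβ₀ hσe) hCFL).trans hden
end

section
/- Full amplification factor bound for the ARS(2,2,2) scheme: let β = 1 − √2/2, let 0 ≤ σ_e ≤ 1, σ_i ≥ 0, and let c, s ∈ ℝ with c² + s² = 1. Setting z = (1 − c) + i s ∈ ℂ, the amplification factor g = (1 − (β − 1) σ_e z)/(1 + β σ_i z) − ((1 − β) σ_i + (2 − β) σ_e) z (1 − β σ_e z)/(1 + β σ_i z)² satisfies |g| ≤ 1. -/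
/-!
The symbol `z = (1 - c) + i s` lies on the circle `|z - 1| = 1`, so `|z|² = 2 Re z` and every
norm below is a polynomial in `x = Re z ∈ [0, 2]`. Because `β` is a root of `2β² - 4β + 1`, the
amplification factor collapses to `g = N / w²` with `w = 1 + β σi z`,
`N = 1 - p z + q z²`, `p = σe + γ σi`, `q = σe²/2 + γ σe σi` and `γ = 1 - 2β = √2 - 1`.
The same relation, read as `2β² = γ²`, cancels everything but `σe + σi` in the order-`x` term of
`|w|⁴ - |N|²`, leaving
`|w|⁴ - |N|² = 2x(σe + σi) - 4x²(q(1 - p + q) - (βσi(1 + βσi))²)`,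
and `q(1 - p + q) ≤ (σe + σi)/4` whenever `σe ≤ 1` and `γ ≤ 1/2`.
-/

open Complex

section CircleThroughOrigin

variable {z : ℂ}

theorem re_mem_Icc_of_normSq_eq (hz : normSq z = 2 * z.re) : z.re ∈ Set.Icc 0 2 := by
  rw [normSq_apply] at hz
  constructor <;> nlinarith [mul_self_nonneg z.im]

theorem normSq_one_add_mul_of_normSq_eq (hz : normSq z = 2 * z.re) (k : ℝ) :
    normSq (1 + k * z) = 1 + 2 * z.re * (k + k ^ 2) := by
  rw [normSq_apply] at hz
  simp only [normSq_apply, add_re, add_im, mul_re, mul_im, one_re, one_im, ofReal_re, ofReal_im]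
  linear_combination k ^ 2 * hz

theorem one_add_mul_ne_zero_of_normSq_eq (hz : normSq z = 2 * z.re) {k : ℝ} (hk : 0 ≤ k) :
    1 + (k : ℂ) * z ≠ 0 := by
  rw [← normSq_pos, normSq_one_add_mul_of_normSq_eq hz]
  have := (re_mem_Icc_of_normSq_eq hz).1
  positivity

theorem normSq_one_sub_mul_add_mul_sq_of_normSq_eq (hz : normSq z = 2 * z.re) (p q : ℝ) :
    normSq (1 - p * z + q * z ^ 2) =
      1 - 2 * z.re * (p + 2 * q - p ^ 2) + 4 * z.re ^ 2 * (q * (1 - p + q)) := by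
  rw [normSq_apply] at hz
  simp only [normSq_apply, add_re, add_im, sub_re, sub_im, mul_re, mul_im, one_re, one_im,
    ofReal_re, ofReal_im, pow_two]
  linear_combination (q ^ 2 * (z.im * z.im + 2 * z.re - z.re * z.re)
    - 2 * q * (1 - p * z.re + q * z.re * z.re) + (2 * q * z.re - p) ^ 2) * hz

end CircleThroughOrigin

theorem norm_div_sq_le_one_of_normSq_le {u w : ℂ} (h : normSq u ≤ normSq w ^ 2) :
    ‖u / w ^ 2‖ ≤ 1 := by
  rw [norm_div, norm_pow]
  refine div_le_one_of_le₀ ?_ (by positivity)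
  rw [← sq_le_sq₀ (norm_nonneg u) (by positivity), Complex.sq_norm, Complex.sq_norm]
  exact h

theorem imex_quadratic_coeff_le {a b γ : ℝ} (ha : 0 ≤ a) (ha₁ : a ≤ 1) (hb : 0 ≤ b)
    (hγ : 0 ≤ γ) (hγ₁ : γ ≤ 1 / 2) :
    (a ^ 2 / 2 + γ * a * b) * (1 - (a + γ * b) + (a ^ 2 / 2 + γ * a * b)) ≤ (a + b) / 4 := by
  -- the `b = 0` part is the same bound for Heun's method, `1 - a + a²/2` its stability polynomial
  have hexplicit : a ^ 2 / 2 * (1 - a + a ^ 2 / 2) ≤ a / 4 := by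
    nlinarith [mul_nonneg ha (mul_nonneg (sub_nonneg.2 ha₁)
      (add_nonneg (sq_nonneg (a - 1 / 2)) (by norm_num : (0 : ℝ) ≤ 3 / 4)))]
  have hcross : γ * (a * (1 - 3 / 2 * a + a ^ 2)) ≤ 1 / 4 := by
    have h₀ : 0 ≤ a * (1 - 3 / 2 * a + a ^ 2) := by nlinarith [sq_nonneg (a - 3 / 4)]
    have h₁ : a * (1 - 3 / 2 * a + a ^ 2) ≤ 1 / 2 := by
      nlinarith [mul_nonneg (sub_nonneg.2 ha₁)
        (add_nonneg (sq_nonneg (a - 1 / 4)) (by norm_num : (0 : ℝ) ≤ 7 / 16))]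
    nlinarith
  have hquad : 0 ≤ γ ^ 2 * a * b ^ 2 * (1 - a) := by
    have := sub_nonneg.2 ha₁
    positivity
  linarith [mul_le_mul_of_nonneg_right hcross hb]

section ARS222

variable {β a b : ℝ}

theorem ars222_factor_eq (hβ : 2 * β ^ 2 - 4 * β + 1 = 0) {z : ℂ}
    (hw : 1 + ((β * b : ℝ) : ℂ) * z ≠ 0) :
    (1 - ((β : ℂ) - 1) * a * z) / (1 + (β : ℂ) * b * z)
        - ((1 - (β : ℂ)) * b + (2 - (β : ℂ)) * a) * z * (1 - (β : ℂ) * a * z)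
          / (1 + (β : ℂ) * b * z) ^ 2
      = (1 - ((a + (1 - 2 * β) * b : ℝ) : ℂ) * z
          + ((a ^ 2 / 2 + (1 - 2 * β) * a * b : ℝ) : ℂ) * z ^ 2)
        / (1 + ((β * b : ℝ) : ℂ) * z) ^ 2 := by
  have hβ' : (2 * (β : ℂ) ^ 2 - 4 * β + 1) = 0 := by exact_mod_cast hβ
  push_cast at hw ⊢
  rw [div_sub_div _ _ hw (pow_ne_zero 2 hw),
    div_eq_div_iff (mul_ne_zero hw (pow_ne_zero 2 hw)) (pow_ne_zero 2 hw)]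
  linear_combination (-(1 + (β : ℂ) * b * z) ^ 3 * (a * b + a ^ 2 / 2) * z ^ 2) * hβ'

theorem ars222_normSq_numerator_le (hβ : 2 * β ^ 2 - 4 * β + 1 = 0)
    (hβ₁ : 1 / 4 ≤ β) (hβ₂ : β ≤ 1 / 2) (ha : 0 ≤ a) (ha₁ : a ≤ 1) (hb : 0 ≤ b)
    {z : ℂ} (hz : normSq z = 2 * z.re) :
    normSq (1 - ((a + (1 - 2 * β) * b : ℝ) : ℂ) * z
        + ((a ^ 2 / 2 + (1 - 2 * β) * a * b : ℝ) : ℂ) * z ^ 2)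
      ≤ normSq (1 + ((β * b : ℝ) : ℂ) * z) ^ 2 := by
  rw [normSq_one_sub_mul_add_mul_sq_of_normSq_eq hz, normSq_one_add_mul_of_normSq_eq hz]
  obtain ⟨hx₀, hx₂⟩ := re_mem_Icc_of_normSq_eq hz
  have hT := imex_quadratic_coeff_le (γ := 1 - 2 * β) ha ha₁ hb (by linarith) (by linarith)
  have hlead : a + (1 - 2 * β) * b + 2 * (a ^ 2 / 2 + (1 - 2 * β) * a * b)
      - (a + (1 - 2 * β) * b) ^ 2 = a + b - 2 * (β * b + (β * b) ^ 2) := by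
    linear_combination (-b ^ 2) * hβ
  rw [hlead]
  nlinarith [mul_le_mul_of_nonneg_left hT (sq_nonneg z.re),
    mul_nonneg (mul_nonneg hx₀ (sub_nonneg.2 hx₂)) (add_nonneg ha hb),
    sq_nonneg (z.re * (β * b + (β * b) ^ 2))]

end ARS222

theorem one_sub_sqrt_two_div_two_spec :
    2 * (1 - √2 / 2) ^ 2 - 4 * (1 - √2 / 2) + 1 = 0 ∧
      1 / 4 ≤ 1 - √2 / 2 ∧ 1 - √2 / 2 ≤ 1 / 2 := by
  have h2 : √2 ^ 2 = 2 := Real.sq_sqrt zero_le_two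
  refine ⟨by linear_combination h2 / 2, ?_, ?_⟩ <;> nlinarith [Real.sqrt_nonneg 2]

/-- Full amplification factor bound for the ARS(2,2,2) scheme: with
`z = (1 - c) + i s` on a Fourier mode, under `0 ≤ σe ≤ 1` and `σi ≥ 0`, the
amplification factor `g` has modulus at most one, uniformly in `σi`. -/
theorem ARS222_amplification_bound (β σe σi c s : ℝ)
    (hβ : β = 1 - Real.sqrt 2 / 2)
    (hσe : 0 ≤ σe) (hCFL : σe ≤ 1) (hσi : 0 ≤ σi)
    (hcs : c ^ 2 + s ^ 2 = 1) :
    ‖(1 - ((β : ℂ) - 1) * (σe : ℂ) * ((1 - (c : ℂ)) + (s : ℂ) * Complex.I))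
          / (1 + (β : ℂ) * (σi : ℂ) * ((1 - (c : ℂ)) + (s : ℂ) * Complex.I))
        - ((1 - (β : ℂ)) * (σi : ℂ) + (2 - (β : ℂ)) * (σe : ℂ))
          * ((1 - (c : ℂ)) + (s : ℂ) * Complex.I)
          * (1 - (β : ℂ) * (σe : ℂ) * ((1 - (c : ℂ)) + (s : ℂ) * Complex.I))
          / (1 + (β : ℂ) * (σi : ℂ) * ((1 - (c : ℂ)) + (s : ℂ) * Complex.I)) ^ 2‖
      ≤ 1 := by
  set z : ℂ := (1 - (c : ℂ)) + (s : ℂ) * Complex.I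
  have hz : normSq z = 2 * z.re := by
    simp only [z, normSq_apply, add_re, add_im, sub_re, sub_im, mul_re, mul_im, one_re, one_im,
      ofReal_re, ofReal_im, I_re, I_im]
    linear_combination hcs
  obtain ⟨hβ₀, hβ₁, hβ₂⟩ := hβ ▸ one_sub_sqrt_two_div_two_spec
  have hw := one_add_mul_ne_zero_of_normSq_eq hz (k := β * σi) (by positivity)
  rw [ars222_factor_eq hβ₀ hw]
  exact norm_div_sq_le_one_of_normSq_le
    (ars222_normSq_numerator_le hβ₀ hβ₁ hβ₂ hσe hCFL hσi hz)
end

section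
/- L^∞-stability of the θ-limited TVD-AP scheme: let β = 1 − √2/2, α ∈ [0,1], θ = α β/(1 − β) = α(√2 − 1), let σ_e ≥ 0 and σ_i ≥ 0 satisfy the CFL conditions (1 − α) σ_e ≤ 1 − α and α σ_e ≤ α √2, and suppose w^n, w^⋆, w^{n+1} : Fin L → ℝ satisfy, for all j (indices cyclic mod L), w^⋆_j = w_j^n − β σ_e (w_j^n − w_{j−1}^n) − β σ_i (w^⋆_j − w^⋆_{j−1}) and w_j^{n+1} = w_j^n − θ(β−1) σ_e (w_j^n − w_{j−1}^n) − θ(1−β) σ_i (w^⋆_j − w^⋆_{j−1}) − θ(2−β) σ_e (w^⋆_j − w^⋆_{j−1}) − θβ σ_i (w_j^{n+1} − w_{j−1}^{n+1}) − (1−θ) σ_e (w_j^n − w_{j−1}^n) − (1−θ) σ_i (w_j^{n+1} − w_{j−1}^{n+1}). Then max_j |w^⋆_j| ≤ max_j |w_j^n| and max_j |w_j^{n+1}| ≤ max_j |w_j^n|. -/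
/-!
Both stages have the form `x + d (x - x ∘ shift) = r` with `d ≥ 0` (an implicit upwind step), so
at an index where `|x|` is maximal the implicit term cannot increase `|x|`: `|x| ≤ ‖r‖∞`.
After eliminating `θ` with `θ (1 - β) = α β` and `θ (2 - β) = α (1 - β)` (both from
`2 (1 - β)² = 1`), the right-hand side of the second stage is the convex combination
`(1 - α) E(σe) wⁿ + α E((1 - β) σe) w⋆` of explicit upwind steps `E(σ) u = u - σ (u - u ∘ shift)`.
Each `a E(σ) u` has the nonnegative weights `a - a σ`, `a σ` as soon as `a σ ≤ a`, which for the
two terms are the two CFL conditions; their sum gives `σe ≤ √2`, hence `β σe ≤ 1` for the first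
stage.
-/

lemma abs_le_of_implicit_upwind {ι : Type*} [Finite ι] (p : ι → ι) {d M : ℝ} {x r : ι → ℝ}
    (hd : 0 ≤ d) (hx : ∀ j, x j + d * (x j - x (p j)) = r j) (hr : ∀ j, |r j| ≤ M) (j : ι) :
    |x j| ≤ M := by
  have : Nonempty ι := ⟨j⟩
  obtain ⟨k, hk⟩ := Finite.exists_max fun j => |x j|
  have hrk : (1 + d) * |x k| ≤ d * |x (p k)| + M := by
    have hxk : (1 + d) * x k = d * x (p k) + r k := by linear_combination hx k
    calc (1 + d) * |x k| = |d * x (p k) + r k| := by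
          rw [← hxk, abs_mul, abs_of_nonneg (by linarith : 0 ≤ 1 + d)]
      _ ≤ d * |x (p k)| + M := by
          grw [abs_add_le, abs_mul, abs_of_nonneg hd, hr k]
  have : d * |x (p k)| ≤ d * |x k| := mul_le_mul_of_nonneg_left (hk _) hd
  exact (hk j).trans (by linarith)

def explicitUpwind {L : ℕ} [NeZero L] (σ : ℝ) (u : Fin L → ℝ) (j : Fin L) : ℝ :=
  u j - σ * (u j - u (j - 1))

lemma abs_mul_explicitUpwind_le {L : ℕ} [NeZero L] {a σ M : ℝ} {u : Fin L → ℝ}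
    (ha : 0 ≤ a) (hσ : 0 ≤ σ) (hCFL : a * σ ≤ a) (hu : ∀ j, |u j| ≤ M) (j : Fin L) :
    |a * explicitUpwind σ u j| ≤ a * M := by
  have hconv : a * explicitUpwind σ u j = (a - a * σ) * u j + a * σ * u (j - 1) := by
    rw [explicitUpwind]; ring
  calc |a * explicitUpwind σ u j| ≤ (a - a * σ) * |u j| + a * σ * |u (j - 1)| := by
        rw [hconv]
        grw [abs_add_le, abs_mul, abs_mul, abs_of_nonneg (sub_nonneg.2 hCFL),
          abs_of_nonneg (mul_nonneg ha hσ)]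
    _ ≤ (a - a * σ) * M + a * σ * M := add_le_add
        (mul_le_mul_of_nonneg_left (hu j) (sub_nonneg.2 hCFL))
        (mul_le_mul_of_nonneg_left (hu _) (mul_nonneg ha hσ))
    _ = a * M := by ring

/-- L^∞-stability of the θ-limited TVD-AP scheme with periodic boundary
conditions, under the uniform CFL conditions `(1 - α) σe ≤ 1 - α` and
`α σe ≤ α √2`, with `θ = α β / (1 - β) = α (√2 - 1)`. -/
theorem theta_scheme_Linf_stable (L : ℕ) [NeZero L] (σe σi : ℝ)
    (β α θ : ℝ) (hβ : β = 1 - Real.sqrt 2 / 2)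
    (hα0 : 0 ≤ α) (hα1 : α ≤ 1) (hθ : θ = α * β / (1 - β))
    (hσe : 0 ≤ σe) (hσi : 0 ≤ σi)
    (hCFL1 : (1 - α) * σe ≤ 1 - α) (hCFL2 : α * σe ≤ α * Real.sqrt 2)
    (wn ws wn1 : Fin L → ℝ)
    (hstage1 : ∀ j : Fin L,
      ws j = wn j - β * σe * (wn j - wn (j - 1))
                  - β * σi * (ws j - ws (j - 1)))
    (hstage2 : ∀ j : Fin L,
      wn1 j = wn j
        - θ * (β - 1) * σe * (wn j - wn (j - 1))
        - θ * (1 - β) * σi * (ws j - ws (j - 1))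
        - θ * (2 - β) * σe * (ws j - ws (j - 1))
        - θ * β * σi * (wn1 j - wn1 (j - 1))
        - (1 - θ) * σe * (wn j - wn (j - 1))
        - (1 - θ) * σi * (wn1 j - wn1 (j - 1))) :
    ((⨆ j : Fin L, |ws j|) ≤ ⨆ j : Fin L, |wn j|) ∧
    ((⨆ j : Fin L, |wn1 j|) ≤ ⨆ j : Fin L, |wn j|) := by
  have hsqrt : Real.sqrt 2 = 2 * (1 - β) := by rw [hβ]; ring
  have hβsq : 2 * (1 - β) ^ 2 = 1 := by
    rw [hβ]; ring_nf; rw [Real.sq_sqrt zero_le_two]; norm_num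
  have hβ1 : β ≤ 1 - β := by linarith [Real.one_lt_sqrt_two]
  have hβ0 : 0 ≤ β := by nlinarith
  have hθβ : θ * (1 - β) = α * β := by rw [hθ]; field_simp [show 1 - β ≠ 0 by nlinarith]
  have hθ2β : θ * (2 - β) = α * (1 - β) := by nlinarith
  rw [hsqrt] at hCFL2
  set M := ⨆ j : Fin L, |wn j|
  have hwn : ∀ j, |wn j| ≤ M := le_ciSup (Finite.bddAbove_range _)
  have hws : ∀ j, |ws j| ≤ M := by
    refine abs_le_of_implicit_upwind (· - 1) (mul_nonneg hβ0 hσi)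
      (r := explicitUpwind (β * σe) wn) (fun j => ?_) fun j => ?_
    · rw [explicitUpwind]; linear_combination hstage1 j
    · simpa using abs_mul_explicitUpwind_le zero_le_one (mul_nonneg hβ0 hσe)
        (by nlinarith) hwn j
  have hwn1 : ∀ j, |wn1 j| ≤ M := by
    refine abs_le_of_implicit_upwind (· - 1) (d := (1 - α * β) * σi) (by nlinarith)
      (r := fun j => (1 - α) * explicitUpwind σe wn j + α * explicitUpwind ((1 - β) * σe) ws j)
      (fun j => ?_) fun j => ?_
    · simp only [explicitUpwind]
      linear_combination hstage2 j - α * hstage1 j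
        + σi * (wn1 j - wn1 (j - 1) - ws j + ws (j - 1)) * hθβ
        + σe * (wn j - wn (j - 1) - ws j + ws (j - 1)) * hθ2β
    · calc _ ≤ (1 - α) * M + α * M := (abs_add_le _ _).trans (add_le_add
            (abs_mul_explicitUpwind_le (by linarith) hσe hCFL1 hwn j)
            (abs_mul_explicitUpwind_le hα0 (by nlinarith) (by nlinarith) hws j))
        _ = M := by ring
  exact ⟨Real.iSup_le hws (Real.iSup_nonneg fun _ => abs_nonneg _),
    Real.iSup_le hwn1 (Real.iSup_nonneg fun _ => abs_nonneg _)⟩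
end

section
/- Maximum principle for the second stage of the θ-limited scheme: under the hypotheses β = 1 − √2/2, α ∈ [0,1], θ = α β/(1 − β), σ_e ≥ 0, σ_i ≥ 0, (1 − α) σ_e ≤ 1 − α and α σ_e ≤ α √2, and with w^n, w^⋆, w^{n+1} : Fin L → ℝ satisfying (for all j, indices cyclic mod L) w^⋆_j = w_j^n − β σ_e (w_j^n − w_{j−1}^n) − β σ_i (w^⋆_j − w^⋆_{j−1}) and w_j^{n+1} = w_j^n − θ(β−1) σ_e (w_j^n − w_{j−1}^n) − θ(1−β) σ_i (w^⋆_j − w^⋆_{j−1}) − θ(2−β) σ_e (w^⋆_j − w^⋆_{j−1}) − θβ σ_i (w_j^{n+1} − w_{j−1}^{n+1}) − (1−θ) σ_e (w_j^n − w_{j−1}^n) − (1−θ) σ_i (w_j^{n+1} − w_{j−1}^{n+1}), one has max_j w_j^{n+1} ≤ (1 − θ (1 − β)/β) · max_j w_j^n + θ (1 − β)/β · max_j w^⋆_j, and consequently max_j w_j^{n+1} ≤ max_j w_j^n. -/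
/-- Implicit upwind maximum principle: if `v j = B j - c (v j - v (j-1))`
with `c ≥ 0` and `B ≤ M` pointwise, then `v ≤ M` pointwise. -/
lemma implicit_upwind_max {L : ℕ} [NeZero L] (c M : ℝ) (hc : 0 ≤ c)
    (v B : Fin L → ℝ)
    (h : ∀ j : Fin L, v j = B j - c * (v j - v (j - 1)))
    (hB : ∀ j : Fin L, B j ≤ M) :
    ∀ j : Fin L, v j ≤ M := by
  obtain ⟨j0, hj0⟩ := Finite.exists_max v
  intro j
  refine le_trans (hj0 j) ?_
  have h0 := h j0
  have h2 := hj0 (j0 - 1)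
  nlinarith [hB j0]

set_option maxHeartbeats 1000000

/-- Maximum principle for the second stage of the θ-limited scheme: the maximum
of the update is bounded by the convex combination
`(1 - θ(1-β)/β) max wⁿ + θ(1-β)/β max w⋆`, and hence by the maximum of `wⁿ`. -/
theorem theta_scheme_max_principle (L : ℕ) [NeZero L] (σe σi : ℝ)
    (β α θ : ℝ) (hβ : β = 1 - Real.sqrt 2 / 2)
    (hα0 : 0 ≤ α) (hα1 : α ≤ 1) (hθ : θ = α * β / (1 - β))
    (hσe : 0 ≤ σe) (hσi : 0 ≤ σi)
    (hCFL1 : (1 - α) * σe ≤ 1 - α) (hCFL2 : α * σe ≤ α * Real.sqrt 2)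
    (wn ws wn1 : Fin L → ℝ)
    (hstage1 : ∀ j : Fin L,
      ws j = wn j - β * σe * (wn j - wn (j - 1))
                  - β * σi * (ws j - ws (j - 1)))
    (hstage2 : ∀ j : Fin L,
      wn1 j = wn j
        - θ * (β - 1) * σe * (wn j - wn (j - 1))
        - θ * (1 - β) * σi * (ws j - ws (j - 1))
        - θ * (2 - β) * σe * (ws j - ws (j - 1))
        - θ * β * σi * (wn1 j - wn1 (j - 1))
        - (1 - θ) * σe * (wn j - wn (j - 1))
        - (1 - θ) * σi * (wn1 j - wn1 (j - 1))) :
    ((⨆ j : Fin L, wn1 j) ≤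
      (1 - θ * (1 - β) / β) * (⨆ j : Fin L, wn j)
        + θ * (1 - β) / β * (⨆ j : Fin L, ws j)) ∧
    ((⨆ j : Fin L, wn1 j) ≤ ⨆ j : Fin L, wn j) := by
  set s : ℝ := Real.sqrt 2 with hsdef
  have hs : s * s = 2 := Real.mul_self_sqrt (by norm_num)
  have hs0 : 0 ≤ s := Real.sqrt_nonneg 2
  have hs1 : 1 ≤ s := by nlinarith
  have hs2 : s ≤ 2 := by nlinarith
  have hslt2 : s < 2 := by nlinarith
  subst hβ
  have hβpos : (0:ℝ) < 1 - s / 2 := by linarith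
  have h1βpos : (0:ℝ) < 1 - (1 - s / 2) := by linarith
  -- θ = α (s - 1)
  have hθ' : θ = α * (s - 1) := by
    rw [hθ]
    rw [div_eq_iff (by linarith : (1:ℝ) - (1 - s / 2) ≠ 0)]
    ring_nf
    nlinarith
  subst hθ'
  -- convex weight
  have hconv : α * (s - 1) * (1 - (1 - s / 2)) / (1 - s / 2) = α := by
    rw [div_eq_iff (ne_of_gt hβpos)]
    ring_nf
    nlinarith
  set Mn : ℝ := ⨆ j : Fin L, wn j with hMndef
  set Ms : ℝ := ⨆ j : Fin L, ws j with hMsdef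
  have hMn : ∀ j : Fin L, wn j ≤ Mn := fun j => le_ciSup (Finite.bddAbove_range wn) j
  have hMs : ∀ j : Fin L, ws j ≤ Ms := fun j => le_ciSup (Finite.bddAbove_range ws) j
  -- σe ≤ α s + (1 - α)
  have hσe' : σe ≤ α * s + (1 - α) := by linarith
  have hβσe : (1 - s / 2) * σe ≤ 1 := by
    nlinarith [mul_nonneg hα0 hs0, mul_nonneg (by linarith : (0:ℝ) ≤ 1 - α) (by linarith : (0:ℝ) ≤ 2 - s)]
  -- stage 1 maximum principle : ws ≤ Mn pointwise
  have hws_le : ∀ j : Fin L, ws j ≤ Mn := by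
    refine implicit_upwind_max ((1 - s / 2) * σi) Mn
      (mul_nonneg (by linarith) hσi) ws
      (fun j => wn j - (1 - s / 2) * σe * (wn j - wn (j - 1))) ?_ ?_
    · intro j; linear_combination hstage1 j
    · intro j
      nlinarith [hMn j, hMn (j - 1), mul_nonneg (by linarith : (0:ℝ) ≤ 1 - s/2) hσe,
        mul_nonneg (mul_nonneg (by linarith : (0:ℝ) ≤ 1 - s/2) hσe) (sub_nonneg.2 (hMn (j-1)))]
  have hMsMn : Ms ≤ Mn := ciSup_le hws_le
  -- key reformulation of stage 2
  have key : ∀ j : Fin L,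
      wn1 j = ((1 - α) * (wn j - σe * (wn j - wn (j - 1)))
            + α * (ws j - s / 2 * σe * (ws j - ws (j - 1))))
          - ((1 - α + α * (s / 2)) * σi) * (wn1 j - wn1 (j - 1)) := by
    intro j
    linear_combination (hstage2 j) - α * (hstage1 j)
      + (α / 2 * (σe * (wn j - wn (j - 1)) - σi * (ws j - ws (j - 1))
          - σe * (ws j - ws (j - 1)) + σi * (wn1 j - wn1 (j - 1)))) * hs
  -- stage 2 maximum principle
  have hwn1_le : ∀ j : Fin L, wn1 j ≤ (1 - α) * Mn + α * Ms := by
    refine implicit_upwind_max ((1 - α + α * (s / 2)) * σi) ((1 - α) * Mn + α * Ms)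
      (mul_nonneg (by nlinarith : (0:ℝ) ≤ 1 - α + α * (s/2)) hσi) wn1
      (fun j => (1 - α) * (wn j - σe * (wn j - wn (j - 1)))
            + α * (ws j - s / 2 * σe * (ws j - ws (j - 1)))) key ?_
    intro j
    have hA1 : (1 - α) * (wn j - σe * (wn j - wn (j - 1))) ≤ (1 - α) * Mn := by
      nlinarith [hMn j, hMn (j - 1),
        mul_nonneg (by linarith : (0:ℝ) ≤ 1 - α) (sub_nonneg.2 (hMn (j-1))),
        mul_nonneg (mul_nonneg (by linarith : (0:ℝ) ≤ 1 - α) hσe) (sub_nonneg.2 (hMn (j-1)))]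
    have hαs : α * (s / 2) * σe ≤ α := by
      nlinarith [mul_nonneg hs0 (sub_nonneg.2 hCFL2)]
    have hA2 : α * (ws j - s / 2 * σe * (ws j - ws (j - 1))) ≤ α * Ms := by
      have t1 : 0 ≤ (α - α * (s / 2) * σe) * (Ms - ws j) :=
        mul_nonneg (by linarith) (by linarith [hMs j])
      have t2 : 0 ≤ (α * (s / 2) * σe) * (Ms - ws (j - 1)) :=
        mul_nonneg (by positivity) (by linarith [hMs (j - 1)])
      nlinarith [t1, t2]
    linarith
  have hpart1 : (⨆ j : Fin L, wn1 j) ≤ (1 - α) * Mn + α * Ms := ciSup_le hwn1_le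
  rw [hconv]
  constructor
  · exact hpart1
  · have : (1 - α) * Mn + α * Ms ≤ Mn := by nlinarith
    linarith
end
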